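/- Let m : N → Z be linear, let u, v, w ∈ N with m(u) = a > 0, m(v) = -b < 0, a > b, s = u + v, and suppose that the pair (u, w) satisfies a + |m(w)| ≤ a + b (i.e., |m(w)| ≤ b) whenever m(w) < 0. If the pair (s, w) is m-bad (m(s)·m(w) < 0), then its m-weight satisfies |m(s)| + |m(w)| = (a - b) + |m(w)| ≤ a < a + b. -/

import Mathlib

theorem new_bad_pair_weight_bound_general
    {N : Type*} [AddCommGroup N] [Module ℤ N]
    (m : N →ₗ[ℤ] ℤ) (u v w : N) (a b : ℤ)
    (ha : m u = a) (hb : m v = -b) (hb' : 0 < b) (hab : a > b)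
    (s : N) (hs : s = u + v)
    (hmax : m w < 0 → |m w| ≤ b)
    (hbad : m s * m w < 0) :
    |m s| + |m w| = (a - b) + |m w| ∧ (a - b) + |m w| ≤ a ∧ a < a + b := by
  have hms : m s = a - b := by rw [hs, map_add, ha, hb, sub_eq_add_neg]
  have hw : m w < 0 := neg_of_mul_neg_right hbad (by omega)
  have hwb : |m w| ≤ b := hmax hw
  exact ⟨by rw [hms, abs_of_pos (sub_pos.2 hab)], by linarith, by linarith⟩

/-- Bound on the weight of a newly created bad pair after one sign-adaptation step:
with `m u = a > 0`, `m v = -b < 0`, `a > b`, `s = u + v`, and `|m w| ≤ b` whenever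
`m w < 0`, if `(s, w)` is `m`-bad then its weight is `(a - b) + |m w| ≤ a < a + b`. -/
theorem new_bad_pair_weight_bound
    {N : Type*} [AddCommGroup N] [Module ℤ N]
    (m : N →ₗ[ℤ] ℤ) (u v w : N) (a b : ℤ)
    (ha : m u = a) (ha' : 0 < a) (hb : m v = -b) (hb' : 0 < b) (hab : a > b)
    (s : N) (hs : s = u + v)
    (hmax : m w < 0 → |m w| ≤ b)
    (hbad : m s * m w < 0) :
    |m s| + |m w| = (a - b) + |m w| ∧ (a - b) + |m w| ≤ a ∧ a < a + b :=
  new_bad_pair_weight_bound_general m u v w a b ha hb hb' hab s hs hmax hbad
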